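/- arXiv:2601.10651 — 2 statements merged into one kernel-verified Lean document; each statement's English description precedes it below -/
import Mathlib

section
/- The downward closure of the maximal multi-property predecessor equals the standard multi-property predecessor of the downward closure: for every downward-closed relation output, ↓(PreMMC(E)) = PreMC(↓(E)) for all E ⊆ S × 𝒫(Φ). -/
def PreMC {S Φ X Y : Type*} (δ : S → Y → X → S) (E : Set (S × Set Φ)) :
    Set (S × Set Φ) :=
  {p | ∃ y : Y, ∀ x : X, (δ p.1 y x, p.2) ∈ E}

def PreMMC {S Φ X Y : Type*} (δ : S → Y → X → S) (E : Set (S × Set Φ)) :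
    Set (S × Set Φ) :=
  {p | ∃ y : Y, ∀ x : X, ∃ D : Set Φ, p.2 ⊆ D ∧ (δ p.1 y x, D) ∈ E}

def dcl {S Φ : Type*} (E : Set (S × Set Φ)) : Set (S × Set Φ) :=
  {p | ∃ C : Set Φ, (p.1, C) ∈ E ∧ p.2 ⊆ C}

/-!
`PreMMC δ E` is literally `PreMC δ (dcl E)`: asking for some superset `D ⊇ C` in `E` is asking
for `C ∈ dcl E`. Since `PreMC` preserves downward closure, `PreMC δ (dcl E)` is already
downward closed, so applying `dcl` to it changes nothing.
-/

section DownwardClosure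

variable {S Φ X Y : Type*}

def IsDownClosed (E : Set (S × Set Φ)) : Prop :=
  ∀ ⦃s : S⦄ ⦃C D : Set Φ⦄, (s, C) ∈ E → D ⊆ C → (s, D) ∈ E

lemma subset_dcl (E : Set (S × Set Φ)) : E ⊆ dcl E :=
  fun p hp => ⟨p.2, hp, subset_rfl⟩

lemma IsDownClosed.dcl_eq {E : Set (S × Set Φ)} (hE : IsDownClosed E) : dcl E = E :=
  Set.Subset.antisymm (fun _ ⟨_, hC, hDC⟩ => hE hC hDC) (subset_dcl E)

lemma isDownClosed_dcl (E : Set (S × Set Φ)) : IsDownClosed (dcl E) :=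
  fun _ _ _ ⟨B, hB, hCB⟩ hDC => ⟨B, hB, hDC.trans hCB⟩

lemma IsDownClosed.preMC {E : Set (S × Set Φ)} (hE : IsDownClosed E) (δ : S → Y → X → S) :
    IsDownClosed (PreMC δ E) :=
  fun _ _ _ ⟨y, hy⟩ hDC => ⟨y, fun x => hE (hy x) hDC⟩

lemma preMMC_eq_preMC_dcl (δ : S → Y → X → S) (E : Set (S × Set Φ)) :
    PreMMC δ E = PreMC δ (dcl E) := by
  ext p
  simp only [PreMMC, PreMC, dcl, Set.mem_ofPred_eq, and_comm]

end DownwardClosure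

theorem dcl_preMMC_general {S Φ X Y : Type*}
    (δ : S → Y → X → S) (E : Set (S × Set Φ)) :
    dcl (PreMMC δ E) = PreMC δ (dcl E) := by
  rw [preMMC_eq_preMC_dcl, ((isDownClosed_dcl E).preMC δ).dcl_eq]

theorem dcl_preMMC {S Φ X Y : Type*} [Fintype S] [Fintype Φ] [Fintype X] [Fintype Y]
    (δ : S → Y → X → S) (E : Set (S × Set Φ)) :
    dcl (PreMMC δ E) = PreMC δ (dcl E) :=
  dcl_preMMC_general δ E
end

section
/- Let (E_i) be defined by E₀ := ↓(Base) and E_{i+1} := E_i ∪ PreMC(E_i), and let (M_i) be defined by M₀ := Max(↓(Base)) and M_{i+1} := Max(M_i ∪ PreMMC(M_i)). Then for all i, ↓(M_i) = E_i. -/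
def MaxRel {S Φ : Type*} (E : Set (S × Set Φ)) : Set (S × Set Φ) :=
  {p ∈ E | ¬∃ D : Set Φ, (p.1, D) ∈ E ∧ p.2 ⊂ D}

def Eseq {S Φ X Y : Type*} (δ : S → Y → X → S) (Base : Set (S × Set Φ)) :
    ℕ → Set (S × Set Φ)
  | 0 => dcl Base
  | i + 1 => Eseq δ Base i ∪ PreMC δ (Eseq δ Base i)

def Mseq {S Φ X Y : Type*} (δ : S → Y → X → S) (Base : Set (S × Set Φ)) :
    ℕ → Set (S × Set Φ)
  | 0 => MaxRel (dcl Base)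
  | i + 1 => MaxRel (Mseq δ Base i ∪ PreMMC δ (Mseq δ Base i))

lemma dcl_MaxRel {S Φ : Type*} [Finite Φ] (E : Set (S × Set Φ)) :
    dcl (MaxRel E) = dcl E := by
  ext ⟨s, C⟩
  constructor
  · rintro ⟨D, ⟨hD, -⟩, hCD⟩
    exact ⟨D, hD, hCD⟩
  · rintro ⟨D, hD, hCD⟩
    have hfin : {D' : Set Φ | (s, D') ∈ E ∧ D ⊆ D'}.Finite := Set.toFinite _
    obtain ⟨M, ⟨hME, hDM⟩, hmax⟩ :=
      hfin.exists_maximal ⟨D, hD, subset_refl D⟩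
    refine ⟨M, ⟨hME, ?_⟩, hCD.trans hDM⟩
    rintro ⟨D', hD', hlt⟩
    exact not_subset_of_ssubset hlt (hmax ⟨hD', hDM.trans hlt.subset⟩ hlt.subset)

lemma dcl_union {S Φ : Type*} (A B : Set (S × Set Φ)) :
    dcl (A ∪ B) = dcl A ∪ dcl B := by
  ext ⟨s, C⟩
  constructor
  · rintro ⟨D, hD | hD, hCD⟩
    · exact Or.inl ⟨D, hD, hCD⟩
    · exact Or.inr ⟨D, hD, hCD⟩
  · rintro (⟨D, hD, hCD⟩ | ⟨D, hD, hCD⟩)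
    · exact ⟨D, Or.inl hD, hCD⟩
    · exact ⟨D, Or.inr hD, hCD⟩

lemma dcl_PreMMC {S Φ X Y : Type*} (δ : S → Y → X → S) (M : Set (S × Set Φ)) :
    dcl (PreMMC δ M) = PreMC δ (dcl M) := by
  ext ⟨s, C⟩
  constructor
  · rintro ⟨C', ⟨y, hy⟩, hCC'⟩
    refine ⟨y, fun x => ?_⟩
    obtain ⟨D, hC'D, hD⟩ := hy x
    exact ⟨D, hD, hCC'.trans hC'D⟩
  · rintro ⟨y, hy⟩
    refine ⟨C, ⟨y, fun x => ?_⟩, subset_refl C⟩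
    obtain ⟨D, hD, hCD⟩ := hy x
    exact ⟨D, hCD, hD⟩

theorem dcl_Mseq_eq_Eseq
    {S Φ X Y : Type*} [Fintype S] [Fintype Φ] [Fintype X] [Fintype Y]
    (δ : S → Y → X → S) (Base : Set (S × Set Φ)) :
    ∀ i : ℕ, dcl (Mseq δ Base i) = Eseq δ Base i := by
  intro i
  induction i with
  | zero =>
    show dcl (MaxRel (dcl Base)) = dcl Base
    rw [dcl_MaxRel]
    ext ⟨s, C⟩
    constructor
    · rintro ⟨D, ⟨D', hD', hDD'⟩, hCD⟩
      exact ⟨D', hD', hCD.trans hDD'⟩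
    · rintro ⟨D, hD, hCD⟩
      exact ⟨D, ⟨D, hD, subset_refl D⟩, hCD⟩
  | succ i ih =>
    show dcl (MaxRel (Mseq δ Base i ∪ PreMMC δ (Mseq δ Base i))) = _
    rw [dcl_MaxRel, dcl_union, dcl_PreMMC, ih]
    rfl
end
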